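/- arXiv:2307.03540 — 2 statements merged into one kernel-verified Lean document; each statement's English description precedes it below -/
import Mathlib

section
/- In a weak brace, for every idempotent e and every element a, ρ_e(a) = a ∘ e, where ρ_b(a) = (-a + a ∘ b)⁻ ∘ a ∘ b. -/
/-!
Put `y = a ∘ e` and `u = λ_a(e) = -a + y`. Since `e + e = e`, distributivity gives
`y = a ∘ (e + e) = y - a + y`, so `u` is idempotent and `y + u = y`; thus `ρ_e(a) = u ∘ y`.
On idempotents the natural order of `(S,+)` implies that of `(S,∘)`, so `u` absorbs the
idempotent `y ∘ y⁻ = -y + y`, and hence `u ∘ y = u ∘ (y ∘ y⁻) ∘ y = y`.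
-/

/-- A weak brace: `(S,+)` and `(S,∘)` are inverse semigroups satisfying
`a ∘ (b + c) = a ∘ b - a + a ∘ c` and `a ∘ a⁻ = -a + a`. -/
class WeakBrace (S : Type*) where
  add : S → S → S
  mul : S → S → S
  neg : S → S
  inv : S → S
  add_assoc : ∀ a b c : S, add (add a b) c = add a (add b c)
  mul_assoc : ∀ a b c : S, mul (mul a b) c = mul a (mul b c)
  add_reg : ∀ a : S, add (add a (neg a)) a = a
  neg_reg : ∀ a : S, add (add (neg a) a) (neg a) = neg a
  neg_unique : ∀ a x : S, add (add a x) a = a → add (add x a) x = x → x = neg a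
  mul_reg : ∀ a : S, mul (mul a (inv a)) a = a
  inv_reg : ∀ a : S, mul (mul (inv a) a) (inv a) = inv a
  inv_unique : ∀ a x : S, mul (mul a x) a = a → mul (mul x a) x = x → x = inv a
  distrib : ∀ a b c : S, mul a (add b c) = add (add (mul a b) (neg a)) (mul a c)
  link : ∀ a : S, mul a (inv a) = add (neg a) a

/-- A dual weak brace: a weak brace whose multiplicative semigroup is Clifford. -/
class DualWeakBrace (S : Type*) extends WeakBrace S where
  clifford : ∀ a : S, WeakBrace.mul a (WeakBrace.inv a) = WeakBrace.mul (WeakBrace.inv a) a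

namespace WeakBrace

variable {S : Type*} [WeakBrace S]

/-- `λ_a(b) = -a + a ∘ b`. -/
def lam (a b : S) : S := add (neg a) (mul a b)

/-- `ρ_b(a) = (-a + a ∘ b)⁻ ∘ a ∘ b`. -/
def rho (b a : S) : S := mul (mul (inv (lam a b)) a) b

/-- `a · b = -a + a ∘ b - b`. -/
def cdot (a b : S) : S := add (add (neg a) (mul a b)) (neg b)

/-- `a⁰ = a - a`. -/
def sq (a : S) : S := add a (neg a)

/-- Additive idempotent (the sets of idempotents of `+` and `∘` coincide). -/
def IsIdem (e : S) : Prop := add e e = e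

/-- `[a,b]₊ = -a - b + a + b`. -/
def brkt (a b : S) : S := add (add (add (neg a) (neg b)) a) b

/-- `I` is a full inverse subsemigroup of `(S,+)`. -/
def IsFullAddSub (I : Set S) : Prop :=
  (∀ e : S, IsIdem e → e ∈ I) ∧ (∀ x ∈ I, ∀ y ∈ I, add x y ∈ I) ∧ (∀ x ∈ I, neg x ∈ I)

/-- `I` is a normal subsemigroup of `(S,+)`. -/
def IsNormalAdd (I : Set S) : Prop :=
  IsFullAddSub I ∧ ∀ a : S, ∀ x ∈ I, add (add (neg a) x) a ∈ I

/-- `I` is a normal subsemigroup of `(S,∘)`. -/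
def IsNormalMul (I : Set S) : Prop :=
  (∀ e : S, IsIdem e → e ∈ I) ∧ (∀ x ∈ I, ∀ y ∈ I, mul x y ∈ I) ∧ (∀ x ∈ I, inv x ∈ I) ∧
    ∀ a : S, ∀ x ∈ I, mul (mul (inv a) x) a ∈ I

/-- `I` is a left ideal of the weak brace `S`. -/
def IsLeftIdeal (I : Set S) : Prop :=
  IsFullAddSub I ∧ ∀ a : S, ∀ x ∈ I, lam a x ∈ I

/-- `I` is an ideal of the weak brace `S`. -/
def IsIdeal (I : Set S) : Prop :=
  IsNormalAdd I ∧ (∀ a : S, ∀ x ∈ I, lam a x ∈ I) ∧ IsNormalMul I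

/-- The socle `Soc(S)`. -/
def Soc (S : Type*) [WeakBrace S] : Set S :=
  {a | ∀ b : S, add a b = mul a b ∧ add a b = add b a}

/-- The annihilator `Ann(S)`. -/
def Ann (S : Type*) [WeakBrace S] : Set S :=
  {a | ∀ b : S, add a b = add b a ∧ add a b = mul a b ∧ mul a b = mul b a}

/-- The congruence `a ∼_I b ⟺ a⁰ = b⁰ and -a + b ∈ I` associated to an ideal `I`. -/
def simI (I : Set S) (a b : S) : Prop := sq a = sq b ∧ add (neg a) b ∈ I

/-- Membership in the inverse subsemigroup of `(S,+)` generated by a set `X`. -/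
inductive genAdd (X : Set S) : S → Prop
  | base : ∀ x ∈ X, genAdd X x
  | add : ∀ a b : S, genAdd X a → genAdd X b → genAdd X (add a b)
  | neg : ∀ a : S, genAdd X a → genAdd X (neg a)

/-- `X · Y`: the additive inverse subsemigroup generated by the elements `x · y`. -/
def cdotSet (X Y : Set S) : Set S :=
  {s | genAdd {z | ∃ x ∈ X, ∃ y ∈ Y, z = cdot x y} s}

/-- `S^(n)` for `n ≥ 1`: `S^(1) = S`, `S^(n+1) = S^(n) · S`. -/
def Spow (S : Type*) [WeakBrace S] : ℕ → Set S
  | 0 => Set.univ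
  | 1 => Set.univ
  | (n+2) => cdotSet (Spow S (n+1)) Set.univ

end WeakBrace

structure IsInverseSemigroup {S : Type*} (op : S → S → S) (iv : S → S) : Prop where
  assoc : ∀ a b c, op (op a b) c = op a (op b c)
  op_iv_op : ∀ a, op (op a (iv a)) a = a
  iv_op_iv : ∀ a, op (op (iv a) a) (iv a) = iv a
  eq_iv : ∀ a x, op (op a x) a = a → op (op x a) x = x → x = iv a

namespace IsInverseSemigroup

variable {S : Type*} {op : S → S → S} {iv : S → S}

theorem iv_iv (h : IsInverseSemigroup op iv) (a : S) : iv (iv a) = a :=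
  (h.eq_iv (iv a) a (h.iv_op_iv a) (h.op_iv_op a)).symm

theorem iv_eq_self_of_idem (h : IsInverseSemigroup op iv) {e : S} (he : op e e = e) :
    iv e = e :=
  (h.eq_iv e e (by rw [he, he]) (by rw [he, he])).symm

theorem op_op_of_idem (h : IsInverseSemigroup op iv) {e : S} (he : op e e = e) (z : S) :
    op e (op e z) = op e z := by
  rw [← h.assoc, he]

/-- If `x = (ef)⁻`, then `f x e` is another inverse of `ef`, so `x = f x e` is idempotent,
hence `x = x⁻ = ef`. -/
theorem idem_op_of_idem (h : IsInverseSemigroup op iv) {e f : S} (he : op e e = e)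
    (hf : op f f = f) : op (op e f) (op e f) = op e f := by
  set x := iv (op e f) with hx
  have hreg : op e (op f (op x (op e f))) = op e f := by
    simpa only [h.assoc] using h.op_iv_op (op e f)
  have hxr : ∀ z, op x (op e (op f (op x z))) = op x z := fun z => by
    simpa only [h.assoc] using congrArg (op · z) (h.iv_op_iv (op e f))
  have hfxe : op (op f x) e = x := by
    refine (h.eq_iv (op e f) (op (op f x) e) ?_ ?_).trans hx.symm
    · simpa only [h.assoc, h.op_op_of_idem he, h.op_op_of_idem hf] using hreg
    · simp only [h.assoc, h.op_op_of_idem he, h.op_op_of_idem hf, hxr]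
  have hxx : op x x = x := by
    rw [← hfxe]
    simp only [h.assoc, hxr]
  have hefx : op e f = x := by
    rw [← h.iv_iv (op e f), ← hx, h.iv_eq_self_of_idem hxx]
  rw [hefx, hxx]

theorem idem_comm (h : IsInverseSemigroup op iv) {e f : S} (he : op e e = e)
    (hf : op f f = f) : op e f = op f e := by
  have hef := h.idem_op_of_idem he hf
  have hfe := h.idem_op_of_idem hf he
  have hinv : op f e = iv (op e f) := by
    refine h.eq_iv _ _ ?_ ?_
    · simpa only [h.assoc, h.op_op_of_idem he, h.op_op_of_idem hf] using hef
    · simpa only [h.assoc, h.op_op_of_idem he, h.op_op_of_idem hf] using hfe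
  rw [hinv, h.iv_eq_self_of_idem hef]

end IsInverseSemigroup

namespace WeakBrace

variable {S : Type*} [WeakBrace S]

theorem isInverseSemigroup_add : IsInverseSemigroup (add : S → S → S) neg :=
  ⟨add_assoc, add_reg, neg_reg, neg_unique⟩

theorem isInverseSemigroup_mul : IsInverseSemigroup (mul : S → S → S) inv :=
  ⟨mul_assoc, mul_reg, inv_reg, inv_unique⟩

theorem neg_eq_self_of_isIdem {e : S} (he : IsIdem e) : neg e = e :=
  isInverseSemigroup_add.iv_eq_self_of_idem he

theorem IsIdem.add_comm {e f : S} (he : IsIdem e) (hf : IsIdem f) : add e f = add f e :=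
  isInverseSemigroup_add.idem_comm he hf

theorem IsIdem.mul_self {e : S} (he : IsIdem e) : mul e e = e := by
  have hlink : mul e (inv e) = e := by rw [link, neg_eq_self_of_isIdem he, he]
  calc mul e e = mul (mul e (inv e)) (mul e (inv e)) := by rw [hlink]
    _ = mul e (inv e) := by rw [← mul_assoc, mul_reg]
    _ = e := hlink

theorem isIdem_of_mul_self {e : S} (he : mul e e = e) : IsIdem e := by
  have hlink : add (neg e) e = e := by
    rw [← link, isInverseSemigroup_mul.iv_eq_self_of_idem he, he]
  unfold IsIdem
  conv_lhs => rw [← hlink]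
  rw [← add_assoc, neg_reg, hlink]

theorem isIdem_mul {e f : S} (he : IsIdem e) (hf : IsIdem f) : IsIdem (mul e f) :=
  isIdem_of_mul_self (isInverseSemigroup_mul.idem_op_of_idem he.mul_self hf.mul_self)

theorem IsIdem.add_mul {e f : S} (he : IsIdem e) (hf : IsIdem f) :
    add e (mul e f) = mul e f := by
  have hd := distrib e f f
  have hef := isIdem_mul he hf
  rw [hf, neg_eq_self_of_isIdem he, hef.add_comm he, add_assoc, hef] at hd
  exact hd.symm

/-- On idempotents, the natural order of `(S,+)` implies that of `(S,∘)`. -/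
theorem IsIdem.mul_eq_of_add_eq {e f : S} (he : IsIdem e) (hf : IsIdem f)
    (hef : add e f = e) : mul f e = e := by
  have hd := distrib e e f
  rw [hef, he.mul_self, neg_eq_self_of_isIdem he, he, he.add_mul hf] at hd
  rw [isInverseSemigroup_mul.idem_comm hf.mul_self he.mul_self, hd.symm]

theorem IsIdem.mul_eq_self_of_add_eq_self {u y : S} (hu : IsIdem u) (hyu : add y u = y) :
    mul u y = y := by
  have hg : IsIdem (add (neg y) y) := by
    unfold IsIdem
    rw [← add_assoc, neg_reg]
  have hgu : add (add (neg y) y) u = add (neg y) y := by rw [add_assoc, hyu]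
  have hreg : mul (add (neg y) y) y = y := by rw [← link, mul_reg]
  rw [← hreg, ← mul_assoc, hg.mul_eq_of_add_eq hu hgu]

theorem isIdem_lam {e : S} (he : IsIdem e) (a : S) : IsIdem (lam a e) := by
  have hd := distrib a e e
  rw [he] at hd
  unfold IsIdem lam
  rw [add_assoc, ← add_assoc (mul a e), ← hd]

theorem IsIdem.add_lam {e : S} (he : IsIdem e) (a : S) : add (mul a e) (lam a e) = mul a e := by
  have hd := distrib a e e
  rw [he, add_assoc] at hd
  exact hd.symm

end WeakBrace

open WeakBrace
theorem stmt1 {S : Type*} [WeakBrace S] (e a : S) (he : IsIdem e) :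
    rho e a = mul a e := by
  have hu : IsIdem (lam a e) := isIdem_lam he a
  calc rho e a = mul (inv (lam a e)) (mul a e) := mul_assoc _ _ _
    _ = mul (lam a e) (mul a e) := by
      rw [isInverseSemigroup_mul.iv_eq_self_of_idem hu.mul_self]
    _ = mul a e := hu.mul_eq_self_of_add_eq_self (he.add_lam a)
end

section
/- In a dual weak brace S, for all a, b, c ∈ S, (a ∘ b) · c = a · (b · c) + b · c + a · c, where a · b := -a + a ∘ b - b. -/
/-!
With `λ_a(b) = -a + a ∘ b` we have `a · b = λ_a(b) - b`. Each `λ_a` is an endomorphism of `(S, +)`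
and `λ_a λ_b = λ_{a ∘ b}`, so `a · (b · c) = λ_{a ∘ b}(c) - λ_a(c)`, and the identity reduces to the
absorption law `λ_a(z) + (-z + z) = λ_a(z)`. It holds because the idempotent `-z + z = z ∘ z⁻`
lies above `-(a ∘ z) + a ∘ z = (-a + a) ∘ (-z + z)`, and `e ∘ f + e = e ∘ f` for idempotents.
-/

structure IsInverseSemigroup_s6 (M : Type*) [Semigroup M] (inv : M → M) : Prop where
  mul_inv_mul (a : M) : a * inv a * a = a
  inv_mul_inv (a : M) : inv a * a * inv a = inv a
  eq_inv (a x : M) : a * x * a = a → x * a * x = x → x = inv a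

namespace IsInverseSemigroup_s6

variable {M : Type*} [Semigroup M] {inv : M → M}

protected theorem inv_inv (h : IsInverseSemigroup_s6 M inv) (a : M) : inv (inv a) = a :=
  (h.eq_inv _ a (h.inv_mul_inv a) (h.mul_inv_mul a)).symm

theorem inv_eq_self (h : IsInverseSemigroup_s6 M inv) {e : M} (he : IsIdempotentElem e) :
    inv e = e :=
  (h.eq_inv e e (by rw [he.eq, he.eq]) (by rw [he.eq, he.eq])).symm

theorem isIdempotentElem_mul_inv (h : IsInverseSemigroup_s6 M inv) (a : M) :
    IsIdempotentElem (a * inv a) := by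
  rw [IsIdempotentElem, ← mul_assoc, h.mul_inv_mul]

theorem isIdempotentElem_inv_mul (h : IsInverseSemigroup_s6 M inv) (a : M) :
    IsIdempotentElem (inv a * a) := by
  rw [IsIdempotentElem, ← mul_assoc, h.inv_mul_inv]

/- The inverse `x` of `e * f` satisfies `f * x * e = x`, which forces `x`, hence `e * f = inv x`,
to be idempotent. -/
theorem isIdempotentElem_mul (h : IsInverseSemigroup_s6 M inv) {e f : M}
    (he : IsIdempotentElem e) (hf : IsIdempotentElem f) : IsIdempotentElem (e * f) := by
  set x := inv (e * f)
  have hx (y : M) : x * (e * (f * (x * y))) = x * y := by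
    simpa only [mul_assoc] using congrArg (· * y) (h.inv_mul_inv (e * f))
  have hfxe : f * x * e = x := by
    refine h.eq_inv (e * f) _ ?_ ?_
    · simpa only [mul_assoc, he.mul_self_mul, hf.mul_self_mul] using h.mul_inv_mul (e * f)
    · simp only [mul_assoc, he.mul_self_mul, hf.mul_self_mul, hx]
  have hxx : IsIdempotentElem x := by
    rw [IsIdempotentElem]
    conv_lhs => rw [← hfxe]
    simpa only [mul_assoc, hx] using hfxe
  have hef : e * f = x := by rw [← h.inv_eq_self hxx, h.inv_inv]
  rwa [hef]

theorem commute_of_isIdempotentElem (h : IsInverseSemigroup_s6 M inv) {e f : M}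
    (he : IsIdempotentElem e) (hf : IsIdempotentElem f) : Commute e f := by
  have hef := h.isIdempotentElem_mul he hf
  have hfe := h.isIdempotentElem_mul hf he
  have key : f * e = inv (e * f) := by
    refine h.eq_inv (e * f) _ ?_ ?_
    · simpa only [mul_assoc, he.mul_self_mul, hf.mul_self_mul] using hef.eq
    · simpa only [mul_assoc, he.mul_self_mul, hf.mul_self_mul] using hfe.eq
  rw [Commute, SemiconjBy, key, h.inv_eq_self hef]

protected theorem mul_inv_rev (h : IsInverseSemigroup_s6 M inv) (a b : M) :
    inv (a * b) = inv b * inv a := by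
  have hcomm := h.commute_of_isIdempotentElem (h.isIdempotentElem_mul_inv b)
    (h.isIdempotentElem_inv_mul a)
  refine (h.eq_inv _ _ ?_ ?_).symm
  · calc a * b * (inv b * inv a) * (a * b) = a * ((b * inv b) * (inv a * a)) * b := by
          simp only [mul_assoc]
      _ = (a * inv a * a) * (b * inv b * b) := by rw [hcomm.eq]; simp only [mul_assoc]
      _ = a * b := by rw [h.mul_inv_mul, h.mul_inv_mul]
  · calc inv b * inv a * (a * b) * (inv b * inv a)
          = inv b * ((inv a * a) * (b * inv b)) * inv a := by simp only [mul_assoc]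
      _ = (inv b * b * inv b) * (inv a * a * inv a) := by rw [← hcomm.eq]; simp only [mul_assoc]
      _ = inv b * inv a := by rw [h.inv_mul_inv, h.inv_mul_inv]

theorem commute_of_isIdempotentElem_of_clifford (h : IsInverseSemigroup_s6 M inv)
    (hcl : ∀ a, a * inv a = inv a * a) {e : M} (he : IsIdempotentElem e) (a : M) :
    Commute e a := by
  have hea := h.commute_of_isIdempotentElem he (h.isIdempotentElem_inv_mul a)
  have hconj : a * e * inv a = e * (a * inv a) := by
    have hcl_ae := hcl (a * e)
    rw [h.mul_inv_rev, h.inv_eq_self he] at hcl_ae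
    calc a * e * inv a = a * e * (e * inv a) := by simp only [mul_assoc, he.mul_self_mul]
      _ = e * inv a * (a * e) := hcl_ae
      _ = e * ((inv a * a) * e) := by simp only [mul_assoc]
      _ = e * (a * inv a) := by rw [← hea.eq, ← mul_assoc, he.eq, hcl]
  calc e * a = e * (a * inv a) * a := by rw [mul_assoc, h.mul_inv_mul]
    _ = a * (e * (inv a * a)) := by rw [← hconj]; simp only [mul_assoc]
    _ = a * e := by rw [hea.eq, ← mul_assoc, ← mul_assoc, h.mul_inv_mul]

end IsInverseSemigroup_s6

local infixl:65 " ∔ " => WeakBrace.add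
local infixl:70 " ⊚ " => WeakBrace.mul
local prefix:max "⊖" => WeakBrace.neg

namespace WeakBrace

section

variable (S : Type*) [WeakBrace S]

abbrev addSemigroup : Semigroup S where
  mul := add
  mul_assoc := WeakBrace.add_assoc

abbrev mulSemigroup : Semigroup S where
  mul := mul
  mul_assoc := WeakBrace.mul_assoc

theorem isInverseSemigroup_add_s6 : @IsInverseSemigroup_s6 S (addSemigroup S) neg :=
  @IsInverseSemigroup_s6.mk S (addSemigroup S) neg add_reg neg_reg neg_unique

theorem isInverseSemigroup_mul_s6 : @IsInverseSemigroup_s6 S (mulSemigroup S) inv :=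
  @IsInverseSemigroup_s6.mk S (mulSemigroup S) inv mul_reg inv_reg inv_unique

end

variable {S : Type*} [WeakBrace S]

protected theorem neg_neg (a : S) : ⊖⊖a = a :=
  letI := addSemigroup S; (isInverseSemigroup_add_s6 S).inv_inv a

protected theorem neg_add_rev (a b : S) : ⊖(a ∔ b) = ⊖b ∔ ⊖a :=
  letI := addSemigroup S; (isInverseSemigroup_add_s6 S).mul_inv_rev a b

protected theorem inv_inv (a : S) : inv (inv a) = a :=
  letI := mulSemigroup S; (isInverseSemigroup_mul_s6 S).inv_inv a

protected theorem mul_inv_rev (a b : S) : inv (a ⊚ b) = inv b ⊚ inv a :=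
  letI := mulSemigroup S; (isInverseSemigroup_mul_s6 S).mul_inv_rev a b

protected theorem neg_eq_self {e : S} (he : e ∔ e = e) : ⊖e = e :=
  letI := addSemigroup S; (isInverseSemigroup_add_s6 S).inv_eq_self he

protected theorem inv_eq_self {e : S} (he : e ⊚ e = e) : inv e = e :=
  letI := mulSemigroup S; (isInverseSemigroup_mul_s6 S).inv_eq_self he

theorem neg_add_self_idem (a : S) : (⊖a ∔ a) ∔ (⊖a ∔ a) = ⊖a ∔ a :=
  letI := addSemigroup S; (isInverseSemigroup_add_s6 S).isIdempotentElem_inv_mul a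

theorem add_neg_self_idem (a : S) : (a ∔ ⊖a) ∔ (a ∔ ⊖a) = a ∔ ⊖a :=
  letI := addSemigroup S; (isInverseSemigroup_add_s6 S).isIdempotentElem_mul_inv a

theorem add_comm_of_idem {e f : S} (he : e ∔ e = e) (hf : f ∔ f = f) : e ∔ f = f ∔ e :=
  letI := addSemigroup S; (isInverseSemigroup_add_s6 S).commute_of_isIdempotentElem he hf

theorem mul_idem_of_idem {e f : S} (he : e ⊚ e = e) (hf : f ⊚ f = f) :
    (e ⊚ f) ⊚ (e ⊚ f) = e ⊚ f :=
  letI := mulSemigroup S; (isInverseSemigroup_mul_s6 S).isIdempotentElem_mul he hf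

theorem add_neg_add_self (x : S) : x ∔ (⊖x ∔ x) = x := by
  rw [← WeakBrace.add_assoc, add_reg]

theorem lam_add (a x y : S) : lam a (x ∔ y) = lam a x ∔ lam a y := by
  simp only [lam, distrib, WeakBrace.add_assoc]

theorem lam_neg (a x : S) : lam a ⊖x = ⊖(lam a x) :=
  neg_unique _ _ (by rw [← lam_add, ← lam_add, add_reg]) (by rw [← lam_add, ← lam_add, neg_reg])

theorem add_idem_of_mul_idem {f : S} (hf : f ⊚ f = f) : f ∔ f = f := by
  have h : ⊖f ∔ f = f := by rw [← link, WeakBrace.inv_eq_self hf, hf]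
  simpa only [h] using neg_add_self_idem f

theorem idem_mul_add_left {e f : S} (he : e ⊚ e = e) (hf : f ⊚ f = f) :
    e ⊚ f ∔ e = e ⊚ f := by
  have hg := add_idem_of_mul_idem (mul_idem_of_idem he hf)
  have he' := add_idem_of_mul_idem he
  have hsplit : e ⊚ f = e ⊚ f ∔ e ∔ e ⊚ f := by
    conv_lhs => rw [← add_idem_of_mul_idem hf]
    rw [distrib, WeakBrace.neg_eq_self he']
  calc e ⊚ f ∔ e = e ⊚ f ∔ (e ⊚ f ∔ e) := by rw [← WeakBrace.add_assoc, hg]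
    _ = e ⊚ f ∔ e ∔ e ⊚ f := by rw [WeakBrace.add_assoc (e ⊚ f) e, add_comm_of_idem he' hg]
    _ = e ⊚ f := hsplit.symm

section Clifford

variable {S : Type*} [DualWeakBrace S]

theorem idem_mul_comm {e : S} (he : e ⊚ e = e) (a : S) : e ⊚ a = a ⊚ e :=
  letI := mulSemigroup S
  (isInverseSemigroup_mul_s6 S).commute_of_isIdempotentElem_of_clifford DualWeakBrace.clifford he a

theorem neg_add_self_mul_idem (a : S) : (⊖a ∔ a) ⊚ (⊖a ∔ a) = ⊖a ∔ a := by
  rw [← link]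
  exact letI := mulSemigroup S; (isInverseSemigroup_mul_s6 S).isIdempotentElem_mul_inv a

theorem mul_neg_add_self (a : S) : a ⊚ (⊖a ∔ a) = a := by
  rw [← link, DualWeakBrace.clifford, ← WeakBrace.mul_assoc, mul_reg]

theorem neg_add_self_inv (a : S) : ⊖(inv a) ∔ inv a = ⊖a ∔ a := by
  rw [← link (inv a), WeakBrace.inv_inv, ← DualWeakBrace.clifford, link]

/- Since `λ_a` is additive, `-a + a = λ_a(-a⁻ + a⁻) = -λ_a(a⁻) + λ_a(a⁻)`, and
`λ_a(a⁻) = -a - a + a` contributes the idempotent `a - a`. -/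
theorem neg_add_self_add_add_neg_self (a : S) : (⊖a ∔ a) ∔ (a ∔ ⊖a) = ⊖a ∔ a := by
  have hlam : lam a (inv a) = ⊖a ∔ (⊖a ∔ a) := by rw [lam, link]
  have hexp : ⊖a ∔ a = (⊖a ∔ a) ∔ (a ∔ ⊖a) ∔ (⊖a ∔ a) := by
    calc ⊖a ∔ a = lam a (⊖a ∔ a) := by rw [lam, mul_neg_add_self]
      _ = ⊖(lam a (inv a)) ∔ lam a (inv a) := by rw [← neg_add_self_inv, lam_add, lam_neg]
      _ = (⊖a ∔ a) ∔ (a ∔ ⊖a) ∔ (⊖a ∔ a) := by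
        rw [hlam, WeakBrace.neg_add_rev, WeakBrace.neg_eq_self (neg_add_self_idem a),
          WeakBrace.neg_neg]
        simp only [WeakBrace.add_assoc]
  calc (⊖a ∔ a) ∔ (a ∔ ⊖a) = (⊖a ∔ a) ∔ ((⊖a ∔ a) ∔ (a ∔ ⊖a)) := by
        rw [← WeakBrace.add_assoc (⊖a ∔ a) (⊖a ∔ a), neg_add_self_idem]
    _ = ⊖a ∔ a := by
        rw [add_comm_of_idem (neg_add_self_idem a) (add_neg_self_idem a), ← WeakBrace.add_assoc,
          ← hexp]

theorem add_neg_self_eq_neg_add_self (a : S) : a ∔ ⊖a = ⊖a ∔ a := by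
  have h := neg_add_self_add_add_neg_self ⊖a
  rw [WeakBrace.neg_neg] at h
  rw [← h, add_comm_of_idem (add_neg_self_idem a) (neg_add_self_idem a),
    neg_add_self_add_add_neg_self]

theorem neg_add_self_mul (a b : S) : ⊖(a ⊚ b) ∔ a ⊚ b = (⊖a ∔ a) ⊚ (⊖b ∔ b) := by
  rw [← link (a ⊚ b), WeakBrace.mul_inv_rev, WeakBrace.mul_assoc, ← WeakBrace.mul_assoc b, link b,
    idem_mul_comm (neg_add_self_mul_idem b) (inv a), ← WeakBrace.mul_assoc, link]

theorem neg_add_self_add (x : S) : ⊖x ∔ x ∔ x = x := by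
  rw [← add_neg_self_eq_neg_add_self, add_reg]

theorem mul_add_neg_add_self (a z : S) : a ⊚ z ∔ (⊖z ∔ z) = a ⊚ z := by
  have habs : (⊖(a ⊚ z) ∔ a ⊚ z) ∔ (⊖z ∔ z) = ⊖(a ⊚ z) ∔ a ⊚ z := by
    rw [neg_add_self_mul, idem_mul_comm (neg_add_self_mul_idem a)]
    exact idem_mul_add_left (neg_add_self_mul_idem z) (neg_add_self_mul_idem a)
  calc a ⊚ z ∔ (⊖z ∔ z) = a ⊚ z ∔ ((⊖(a ⊚ z) ∔ a ⊚ z) ∔ (⊖z ∔ z)) := by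
        rw [← WeakBrace.add_assoc (a ⊚ z) (⊖(a ⊚ z) ∔ a ⊚ z), add_neg_add_self]
    _ = a ⊚ z := by rw [habs, add_neg_add_self]

theorem add_neg_self_add_mul (a b : S) : (a ∔ ⊖a) ∔ a ⊚ b = a ⊚ b := by
  have habs : (⊖a ∔ a) ∔ (⊖(a ⊚ b) ∔ a ⊚ b) = ⊖(a ⊚ b) ∔ a ⊚ b := by
    have hab := mul_idem_of_idem (neg_add_self_mul_idem a) (neg_add_self_mul_idem b)
    rw [neg_add_self_mul, add_comm_of_idem (neg_add_self_idem a) (add_idem_of_mul_idem hab)]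
    exact idem_mul_add_left (neg_add_self_mul_idem a) (neg_add_self_mul_idem b)
  calc (a ∔ ⊖a) ∔ a ⊚ b = (⊖a ∔ a) ∔ (⊖(a ⊚ b) ∔ a ⊚ b) ∔ a ⊚ b := by
        rw [add_neg_self_eq_neg_add_self, WeakBrace.add_assoc (⊖a ∔ a), neg_add_self_add]
    _ = a ⊚ b := by rw [habs, neg_add_self_add]

theorem lam_lam (a b c : S) : lam a (lam b c) = lam (a ⊚ b) c := by
  calc lam a (lam b c) = ⊖(lam a b) ∔ lam a (b ⊚ c) := by
        rw [show lam b c = ⊖b ∔ b ⊚ c from rfl, lam_add, lam_neg]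
    _ = ⊖(a ⊚ b) ∔ ((a ∔ ⊖a) ∔ a ⊚ (b ⊚ c)) := by
        simp only [lam, WeakBrace.neg_add_rev, WeakBrace.neg_neg, WeakBrace.add_assoc]
    _ = lam (a ⊚ b) c := by rw [add_neg_self_add_mul, ← WeakBrace.mul_assoc]; rfl

theorem lam_add_neg_add_self (a z : S) : lam a z ∔ (⊖z ∔ z) = lam a z := by
  rw [lam, WeakBrace.add_assoc, mul_add_neg_add_self]

theorem cdot_eq_lam_add_neg (a b : S) : cdot a b = lam a b ∔ ⊖b := rfl

theorem cdot_add_self (a z : S) : cdot a z ∔ z = lam a z := by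
  rw [cdot_eq_lam_add_neg, WeakBrace.add_assoc, lam_add_neg_add_self]

theorem lam_cdot (a b c : S) : lam a (cdot b c) = lam (a ⊚ b) c ∔ ⊖(lam a c) := by
  rw [cdot_eq_lam_add_neg, lam_add, lam_neg, lam_lam]

end Clifford

end WeakBrace

open WeakBrace
theorem stmt6 {S : Type*} [DualWeakBrace S] (a b c : S) :
    cdot (mul a b) c = add (add (cdot a (cdot b c)) (cdot b c)) (cdot a c) := by
  have habsorb : lam (a ⊚ b) c ∔ (⊖(lam a c) ∔ lam a c) = lam (a ⊚ b) c := by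
    rw [← lam_lam, ← lam_neg, ← lam_add, ← lam_add, lam_add_neg_add_self]
  calc cdot (a ⊚ b) c = lam (a ⊚ b) c ∔ (⊖(lam a c) ∔ lam a c) ∔ ⊖c := by
        rw [habsorb, cdot_eq_lam_add_neg]
    _ = lam a (cdot b c) ∔ cdot a c := by
        rw [lam_cdot, cdot_eq_lam_add_neg a c]
        simp only [WeakBrace.add_assoc]
    _ = cdot a (cdot b c) ∔ cdot b c ∔ cdot a c := by rw [cdot_add_self]
end
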